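/- arXiv:2403.03687 — 2 statements merged into one kernel-verified Lean document; each statement's English description precedes it below -/
import Mathlib

section
/- Let (Y_n)_{n≥0} be a Galton–Watson process with Y_0 = 1 and mean offspring m = E(Y_1) ∈ (0,1). Then (1/n) log P(Y_n > 0) → log m as n → ∞. -/
/-!
Markov's inequality gives `P(Y_n > 0) ≤ E Y_n = m ^ n`. For the lower bound, cap the offspring
numbers at `L`: the capped process `Z ≤ Y` has mean `ν_L ↑ m` and a finite second moment `β_L`.
Conditioning on `Z_n` gives `E Z_n = ν^n` and `E Z_(n+1)^2 ≤ ν^2 E Z_n^2 + β ν^n`, hence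
`ν E Z_n^2 ≤ ν^(2n+1) + n β ν^n`, and the second moment method `(E Z)^2 ≤ E Z^2 · P(Z > 0)` yields
`P(Y_n > 0) ≥ P(Z_n > 0) ≥ ν^(n+1) / (1 + n β)`, whose exponential rate `log ν_L` tends to `log m`.
-/

open MeasureTheory ProbabilityTheory Filter Set
open scoped ENNReal NNReal Topology Classical

noncomputable section

/-- A Galton–Watson process: i.i.d. offspring variables `ξ (k,n)`. -/
structure GW (Ω : Type) [MeasurableSpace Ω] (P : Measure Ω) where
  ξ : ℕ × ℕ → Ω → ℕ
  meas : ∀ p, Measurable (ξ p)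
  indep : iIndepFun ξ P
  ident : ∀ p q, IdentDistrib (ξ p) (ξ q) P P

/-- the population sizes: `Y 0 = 1`, `Y (n+1) = Σ_{k < Y n} ξ (k,n)`. -/
def GW.Y {Ω : Type} [MeasurableSpace Ω] {P : Measure Ω} (g : GW Ω P) : ℕ → Ω → ℕ
  | 0, _ => 1
  | n + 1, ω => ∑ k ∈ Finset.range (g.Y n ω), g.ξ (k, n) ω

theorem Measurable.nat_comp {Ω β : Type*} {_ : MeasurableSpace Ω} [MeasurableSpace β]
    {f : Ω → ℕ} (hf : Measurable f) (φ : ℕ → β) : Measurable fun ω => φ (f ω) :=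
  measurable_from_nat.comp hf

theorem Measurable.sum_range_apply {Ω M : Type*} {_ : MeasurableSpace Ω} [AddCommMonoid M]
    [MeasurableSpace M] [MeasurableAdd₂ M] {N : Ω → ℕ} (hN : Measurable N) {f : ℕ → Ω → M}
    (hf : ∀ k, Measurable (f k)) :
    Measurable fun ω => ∑ k ∈ Finset.range (N ω), f k ω :=
  (measurable_from_prod_countable_left (f := fun p : Ω × ℕ => ∑ k ∈ Finset.range p.2, f k p.1)
    fun j => Finset.measurable_sum (Finset.range j) fun k _ => hf k).comp
      (measurable_id.prodMk hN)

section Lintegral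

variable {Ω : Type*} [MeasurableSpace Ω] {μ : Measure Ω}

theorem lintegral_comp_eq_tsum_nat {N : Ω → ℕ} (hN : Measurable N) (φ : ℕ → ℝ≥0∞) :
    ∫⁻ ω, φ (N ω) ∂μ = ∑' j, φ j * μ {ω | N ω = j} := by
  rw [← lintegral_map measurable_from_top hN, lintegral_countable']
  simp_rw [Measure.map_apply hN (measurableSet_singleton _)]
  rfl

theorem sq_lintegral_mul_le {f g : Ω → ℝ≥0∞} (hf : AEMeasurable f μ) (hg : AEMeasurable g μ) :
    (∫⁻ ω, f ω * g ω ∂μ) ^ 2 ≤ (∫⁻ ω, f ω ^ 2 ∂μ) * ∫⁻ ω, g ω ^ 2 ∂μ := by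
  have h := ENNReal.lintegral_mul_le_Lp_mul_Lq μ Real.HolderConjugate.two_two hf hg
  simp only [ENNReal.rpow_two, Pi.mul_apply] at h
  calc (∫⁻ ω, f ω * g ω ∂μ) ^ 2
      ≤ ((∫⁻ ω, f ω ^ 2 ∂μ) ^ (1 / 2 : ℝ) * (∫⁻ ω, g ω ^ 2 ∂μ) ^ (1 / 2 : ℝ)) ^ 2 := by
        gcongr
    _ = _ := by
      rw [mul_pow, ← ENNReal.rpow_natCast, ← ENNReal.rpow_natCast, ← ENNReal.rpow_mul,
        ← ENNReal.rpow_mul]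
      norm_num

theorem sq_lintegral_le_mul_measure_support {f : Ω → ℝ≥0∞} (hf : Measurable f) :
    (∫⁻ ω, f ω ∂μ) ^ 2 ≤ (∫⁻ ω, f ω ^ 2 ∂μ) * μ (Function.support f) := by
  have hs : MeasurableSet (Function.support f) := hf (measurableSet_singleton 0).compl
  have hf1 : ∀ ω, f ω * (Function.support f).indicator 1 ω = f ω := fun ω => by
    by_cases h : f ω = 0 <;> simp [h]
  have h1 : ∀ ω, (Function.support f).indicator (1 : Ω → ℝ≥0∞) ω ^ 2
      = (Function.support f).indicator 1 ω := fun ω => by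
    by_cases h : f ω = 0 <;> simp [h]
  have := sq_lintegral_mul_le hf.aemeasurable (measurable_one.indicator hs).aemeasurable (μ := μ)
  simpa only [hf1, h1, lintegral_indicator_one hs] using this

end Lintegral

theorem tendsto_inv_mul_log_one_add_mul {b : ℝ} (hb : 0 < b) :
    Tendsto (fun n : ℕ => (n : ℝ)⁻¹ * Real.log (1 + b * n)) atTop (𝓝 0) := by
  have h := (Real.tendsto_pow_log_div_mul_add_atTop b⁻¹ (-b⁻¹) 1 (inv_ne_zero hb.ne')).comp
    (tendsto_atTop_add_const_left _ 1 (tendsto_natCast_atTop_atTop.const_mul_atTop hb))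
  refine h.congr fun n => ?_
  rw [Function.comp_apply, pow_one, div_eq_inv_mul]
  congr 2
  field_simp
  ring

theorem tendsto_inv_mul_log_of_pow_bounds {q : ℕ → ℝ} {m : ℝ} (hm : 0 < m)
    (hup : ∀ n, q n ≤ m ^ n)
    (hlow : ∀ c, 0 < c → c < m → ∃ b, 0 ≤ b ∧ ∀ n : ℕ, c ^ (n + 1) ≤ (1 + b * n) * q n) :
    Tendsto (fun n : ℕ => (n : ℝ)⁻¹ * Real.log (q n)) atTop (𝓝 (Real.log m)) := by
  have hq : ∀ n, 0 < q n := by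
    obtain ⟨b, hb, hbound⟩ := hlow (m / 2) (half_pos hm) (half_lt_self hm)
    exact fun n => pos_of_mul_pos_right ((pow_pos (half_pos hm) _).trans_le (hbound n))
      (by positivity)
  refine tendsto_order.2 ⟨fun a ha => ?_, fun a ha => ?_⟩
  · obtain ⟨d, had, hdm⟩ := exists_between ha
    obtain ⟨b, hb, hbound⟩ :=
      hlow (Real.exp d) (Real.exp_pos d) ((Real.lt_log_iff_exp_lt hm).1 hdm)
    -- `b + 1` rather than `b`, so that `1 + (b + 1) * n → ∞`
    have hlim : Tendsto
        (fun n : ℕ => (1 + (n : ℝ)⁻¹) * d - (n : ℝ)⁻¹ * Real.log (1 + (b + 1) * n))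
        atTop (𝓝 d) := by
      simpa using ((tendsto_inv_atTop_nhds_zero_nat.const_add 1).mul_const d).sub
        (tendsto_inv_mul_log_one_add_mul (by linarith : 0 < b + 1))
    filter_upwards [hlim.eventually (lt_mem_nhds had), eventually_gt_atTop 0] with n hlt hn
    have hn' : (0 : ℝ) < n := by exact_mod_cast hn
    have hkey : (n + 1) * d ≤ Real.log (1 + (b + 1) * n) + Real.log (q n) := by
      rw [← Real.log_mul (by positivity) (hq n).ne', ← Real.log_exp ((n + 1) * d)]
      refine Real.log_le_log (Real.exp_pos _) ?_
      calc Real.exp ((n + 1) * d) = Real.exp d ^ (n + 1) := by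
            rw [← Real.exp_nat_mul]; push_cast; ring_nf
        _ ≤ (1 + b * n) * q n := hbound n
        _ ≤ (1 + (b + 1) * n) * q n := by gcongr; exact (hq n).le; linarith
    refine hlt.trans_le ?_
    calc (1 + (n : ℝ)⁻¹) * d - (n : ℝ)⁻¹ * Real.log (1 + (b + 1) * n)
        = (n : ℝ)⁻¹ * ((n + 1) * d - Real.log (1 + (b + 1) * n)) := by field_simp
      _ ≤ (n : ℝ)⁻¹ * Real.log (q n) := by gcongr; linarith
  · filter_upwards [eventually_gt_atTop 0] with n hn
    have hn' : (0 : ℝ) < n := by exact_mod_cast hn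
    calc (n : ℝ)⁻¹ * Real.log (q n) ≤ (n : ℝ)⁻¹ * Real.log (m ^ n) := by
          gcongr
          exacts [hq n, hup n]
      _ = Real.log m := by rw [Real.log_pow]; field_simp
      _ < a := ha

namespace GW

variable {Ω : Type} [MeasurableSpace Ω] {P : Measure Ω} (g : GW Ω P)

abbrev offspringSigma (s : Set (ℕ × ℕ)) : MeasurableSpace Ω :=
  ⨆ p ∈ s, MeasurableSpace.comap (g.ξ p) inferInstance

theorem offspringSigma_le (s : Set (ℕ × ℕ)) : g.offspringSigma s ≤ ‹MeasurableSpace Ω› :=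
  iSup₂_le fun p _ => (g.meas p).comap_le

theorem offspringSigma_mono {s t : Set (ℕ × ℕ)} (h : s ⊆ t) :
    g.offspringSigma s ≤ g.offspringSigma t :=
  biSup_mono h

theorem measurable_ξ_offspringSigma {s : Set (ℕ × ℕ)} {p : ℕ × ℕ} (hp : p ∈ s) :
    Measurable[g.offspringSigma s] (g.ξ p) :=
  Measurable.of_comap_le <| le_iSup₂
    (f := fun p (_ : p ∈ s) => MeasurableSpace.comap (g.ξ p) inferInstance) p hp

theorem indep_offspringSigma {s t : Set (ℕ × ℕ)} (h : Disjoint s t) :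
    Indep (g.offspringSigma s) (g.offspringSigma t) P :=
  indep_iSup_of_disjoint (fun p => (g.meas p).comap_le) g.indep h

def offspringSum (n j : ℕ) (ω : Ω) : ℕ :=
  ∑ k ∈ Finset.range j, g.ξ (k, n) ω

theorem Y_succ (n : ℕ) (ω : Ω) : g.Y (n + 1) ω = g.offspringSum n (g.Y n ω) ω :=
  rfl

theorem measurable_offspringSum (n j : ℕ) :
    Measurable[g.offspringSigma {p | p.2 = n}] (g.offspringSum n j) :=
  Finset.measurable_sum _ fun _ _ => g.measurable_ξ_offspringSigma rfl

theorem measurable_Y_offspringSigma (n : ℕ) :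
    Measurable[g.offspringSigma {p | p.2 < n}] (g.Y n) := by
  induction n with
  | zero => exact measurable_const
  | succ n ih =>
    exact Measurable.sum_range_apply
      (ih.mono (g.offspringSigma_mono fun p (hp : p.2 < n) => Nat.lt_succ_of_lt hp) le_rfl)
      fun k => g.measurable_ξ_offspringSigma (Nat.lt_succ_self n)

theorem measurable_Y (n : ℕ) : Measurable (g.Y n) :=
  (g.measurable_Y_offspringSigma n).mono (g.offspringSigma_le _) le_rfl

def mean : ℝ≥0∞ := ∫⁻ ω, (g.ξ (0, 0) ω : ℝ≥0∞) ∂P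

def secondMoment : ℝ≥0∞ := ∫⁻ ω, (g.ξ (0, 0) ω : ℝ≥0∞) ^ 2 ∂P

theorem lintegral_comp_ξ (φ : ℕ → ℝ≥0∞) (p : ℕ × ℕ) :
    ∫⁻ ω, φ (g.ξ p ω) ∂P = ∫⁻ ω, φ (g.ξ (0, 0) ω) ∂P :=
  ((g.ident p (0, 0)).comp measurable_from_top).lintegral_eq

/-- Conditioning on `Y n`: it is independent of the offspring variables of generation `n`. -/
theorem lintegral_comp_Y_succ (φ : ℕ → ℝ≥0∞) (n : ℕ) :
    ∫⁻ ω, φ (g.Y (n + 1) ω) ∂P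
      = ∑' j, P {ω | g.Y n ω = j} * ∫⁻ ω, φ (g.offspringSum n j ω) ∂P := by
  have hsetσ : ∀ j, MeasurableSet[g.offspringSigma {p | p.2 < n}] {ω | g.Y n ω = j} := fun j =>
    g.measurable_Y_offspringSigma n (measurableSet_singleton j)
  have hset : ∀ j, MeasurableSet {ω | g.Y n ω = j} := fun j => g.offspringSigma_le _ _ (hsetσ j)
  have hsplit : ∀ ω, φ (g.Y (n + 1) ω)
      = ∑' j, {ω | g.Y n ω = j}.indicator (fun _ => 1) ω * φ (g.offspringSum n j ω) := fun ω => by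
    rw [tsum_eq_single (g.Y n ω) fun j hj => by simp [Ne.symm hj]]
    simp [Y_succ]
  have hdisj : Disjoint {p : ℕ × ℕ | p.2 < n} {p | p.2 = n} :=
    Set.disjoint_left.2 fun p (h₁ : p.2 < n) (h₂ : p.2 = n) => h₁.ne h₂
  have hφS : ∀ j, Measurable fun ω => φ (g.offspringSum n j ω) := fun j =>
    ((g.measurable_offspringSum n j).mono (g.offspringSigma_le _) le_rfl).nat_comp φ
  simp_rw [hsplit]
  rw [lintegral_tsum fun j => ((measurable_const.indicator (hset j)).fun_mul (hφS j)).aemeasurable]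
  refine tsum_congr fun j => ?_
  rw [lintegral_mul_eq_lintegral_mul_lintegral_of_independent_measurableSpace
    (g.offspringSigma_le _) (g.offspringSigma_le _) (g.indep_offspringSigma hdisj)
    (measurable_const.indicator (hsetσ j))
    ((g.measurable_offspringSum n j).nat_comp φ), lintegral_indicator_const (hset j), one_mul]

theorem lintegral_offspringSum (n j : ℕ) :
    ∫⁻ ω, (g.offspringSum n j ω : ℝ≥0∞) ∂P = j * g.mean := by
  simp only [offspringSum, Nat.cast_sum]
  rw [lintegral_finsetSum _ fun k _ => (g.meas (k, n)).nat_comp _]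
  simp [g.lintegral_comp_ξ (fun i => (i : ℝ≥0∞)), mean]

theorem lintegral_offspringSum_sq_le (n j : ℕ) :
    ∫⁻ ω, (g.offspringSum n j ω : ℝ≥0∞) ^ 2 ∂P ≤ j * g.secondMoment + j ^ 2 * g.mean ^ 2 := by
  have hmeas : ∀ k, Measurable fun ω => (g.ξ (k, n) ω : ℝ≥0∞) := fun k =>
    (g.meas (k, n)).nat_comp _
  have hpair : ∀ k l, ∫⁻ ω, (g.ξ (k, n) ω : ℝ≥0∞) * g.ξ (l, n) ω ∂P
      ≤ (if k = l then g.secondMoment else 0) + g.mean ^ 2 := by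
    intro k l
    rcases eq_or_ne k l with rfl | hkl
    · simp only [← sq, if_true, g.lintegral_comp_ξ (fun i => (i : ℝ≥0∞) ^ 2)]
      exact le_self_add
    · have hind : IndepFun (fun ω => (g.ξ (k, n) ω : ℝ≥0∞)) (fun ω => (g.ξ (l, n) ω : ℝ≥0∞)) P :=
        (g.indep.indepFun (by simp [hkl])).comp measurable_from_top measurable_from_top
      rw [lintegral_mul_eq_lintegral_mul_lintegral_of_indepFun'' (hmeas k).aemeasurable
        (hmeas l).aemeasurable hind, g.lintegral_comp_ξ (fun i => (i : ℝ≥0∞)) (k, n),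
        g.lintegral_comp_ξ (fun i => (i : ℝ≥0∞)) (l, n), if_neg hkl, zero_add, sq, mean]
  calc ∫⁻ ω, (g.offspringSum n j ω : ℝ≥0∞) ^ 2 ∂P
      = ∑ k ∈ Finset.range j, ∑ l ∈ Finset.range j,
          ∫⁻ ω, (g.ξ (k, n) ω : ℝ≥0∞) * g.ξ (l, n) ω ∂P := by
        simp only [offspringSum, Nat.cast_sum, sq, Finset.sum_mul_sum]
        rw [lintegral_finsetSum _ fun k _ =>
          Finset.measurable_sum _ fun l _ => (hmeas k).fun_mul (hmeas l)]
        exact Finset.sum_congr rfl fun k _ =>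
          lintegral_finsetSum _ fun l _ => (hmeas k).fun_mul (hmeas l)
    _ ≤ ∑ k ∈ Finset.range j, ∑ l ∈ Finset.range j,
          ((if k = l then g.secondMoment else 0) + g.mean ^ 2) := by
        gcongr with k _ l _
        exact hpair k l
    _ = j * g.secondMoment + j ^ 2 * g.mean ^ 2 := by
        simp only [Finset.sum_add_distrib, Finset.sum_ite_eq, Finset.sum_ite_mem,
          Finset.inter_self, Finset.sum_const, Finset.card_range, nsmul_eq_mul]
        ring

theorem Y_le_Y_of_ξ_le {h : GW Ω P} (hle : ∀ p ω, h.ξ p ω ≤ g.ξ p ω) (n : ℕ) (ω : Ω) :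
    h.Y n ω ≤ g.Y n ω := by
  induction n with
  | zero => rfl
  | succ n ih =>
    calc h.Y (n + 1) ω ≤ ∑ k ∈ Finset.range (h.Y n ω), g.ξ (k, n) ω :=
          Finset.sum_le_sum fun k _ => hle (k, n) ω
      _ ≤ g.Y (n + 1) ω := Finset.sum_le_sum_of_subset (Finset.range_subset_range.2 ih)

def truncate (L : ℕ) : GW Ω P where
  ξ p ω := min (g.ξ p ω) L
  meas p := (g.meas p).nat_comp (fun j => min j L)
  indep := g.indep.comp (fun _ j => min j L) fun _ => measurable_from_nat
  ident p q := (g.ident p q).comp (measurable_from_nat (f := fun j => min j L))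

theorem mean_truncate_le (L : ℕ) : (g.truncate L).mean ≤ g.mean :=
  lintegral_mono fun _ => Nat.cast_le.2 (min_le_left _ _)

theorem tendsto_mean_truncate : Tendsto (fun L => (g.truncate L).mean) atTop (𝓝 g.mean) :=
  lintegral_tendsto_of_tendsto_of_monotone
    (fun L => ((g.truncate L).meas _).nat_comp _ |>.aemeasurable)
    (ae_of_all _ fun ω L L' hL => Nat.cast_le.2 (min_le_min_left _ hL))
    (ae_of_all _ fun ω => tendsto_atTop_of_eventually_const (i₀ := g.ξ (0, 0) ω) fun L hL => by
      simp [truncate, hL])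

section Probability

variable [IsProbabilityMeasure P]

theorem lintegral_Y (n : ℕ) : ∫⁻ ω, (g.Y n ω : ℝ≥0∞) ∂P = g.mean ^ n := by
  induction n with
  | zero => simp [Y]
  | succ n ih =>
    rw [g.lintegral_comp_Y_succ (fun j => (j : ℝ≥0∞)), pow_succ, ← ih,
      lintegral_comp_eq_tsum_nat (g.measurable_Y n), ← ENNReal.tsum_mul_right]
    simp_rw [g.lintegral_offspringSum]
    exact tsum_congr fun j => by ring

theorem lintegral_Y_succ_sq_le (n : ℕ) :
    ∫⁻ ω, (g.Y (n + 1) ω : ℝ≥0∞) ^ 2 ∂P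
      ≤ g.mean ^ 2 * ∫⁻ ω, (g.Y n ω : ℝ≥0∞) ^ 2 ∂P + g.secondMoment * g.mean ^ n := by
  calc ∫⁻ ω, (g.Y (n + 1) ω : ℝ≥0∞) ^ 2 ∂P
      = ∑' j, P {ω | g.Y n ω = j} * ∫⁻ ω, (g.offspringSum n j ω : ℝ≥0∞) ^ 2 ∂P :=
        g.lintegral_comp_Y_succ (fun j => (j : ℝ≥0∞) ^ 2) n
    _ ≤ ∑' j, P {ω | g.Y n ω = j} * (j * g.secondMoment + j ^ 2 * g.mean ^ 2) :=
        ENNReal.tsum_le_tsum fun j => by gcongr; exact g.lintegral_offspringSum_sq_le n j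
    _ = g.mean ^ 2 * ∑' j : ℕ, (j : ℝ≥0∞) ^ 2 * P {ω | g.Y n ω = j}
          + g.secondMoment * ∑' j : ℕ, (j : ℝ≥0∞) * P {ω | g.Y n ω = j} := by
        rw [← ENNReal.tsum_mul_left, ← ENNReal.tsum_mul_left, ← ENNReal.tsum_add]
        exact tsum_congr fun j => by ring
    _ = _ := by
        rw [← lintegral_comp_eq_tsum_nat (g.measurable_Y n),
          ← lintegral_comp_eq_tsum_nat (g.measurable_Y n), g.lintegral_Y]

theorem mean_mul_lintegral_Y_sq_le (hmean : g.mean ≤ 1) (n : ℕ) :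
    g.mean * ∫⁻ ω, (g.Y n ω : ℝ≥0∞) ^ 2 ∂P
      ≤ g.mean ^ (2 * n + 1) + n * g.secondMoment * g.mean ^ n := by
  induction n with
  | zero => simp [Y]
  | succ n ih =>
    have hpow : g.mean ^ (n + 2) ≤ g.mean ^ (n + 1) :=
      pow_le_pow_of_le_one zero_le hmean (by omega)
    calc g.mean * ∫⁻ ω, (g.Y (n + 1) ω : ℝ≥0∞) ^ 2 ∂P
        ≤ g.mean * (g.mean ^ 2 * ∫⁻ ω, (g.Y n ω : ℝ≥0∞) ^ 2 ∂P
            + g.secondMoment * g.mean ^ n) := by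
          gcongr; exact g.lintegral_Y_succ_sq_le n
      _ = g.mean ^ 2 * (g.mean * ∫⁻ ω, (g.Y n ω : ℝ≥0∞) ^ 2 ∂P)
            + g.secondMoment * g.mean ^ (n + 1) := by ring
      _ ≤ g.mean ^ 2 * (g.mean ^ (2 * n + 1) + n * g.secondMoment * g.mean ^ n)
            + g.secondMoment * g.mean ^ (n + 1) := by gcongr
      _ = g.mean ^ (2 * (n + 1) + 1) + n * g.secondMoment * g.mean ^ (n + 2)
            + g.secondMoment * g.mean ^ (n + 1) := by ring
      _ ≤ g.mean ^ (2 * (n + 1) + 1) + n * g.secondMoment * g.mean ^ (n + 1)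
            + g.secondMoment * g.mean ^ (n + 1) := by gcongr
      _ = g.mean ^ (2 * (n + 1) + 1) + ↑(n + 1) * g.secondMoment * g.mean ^ (n + 1) := by
          push_cast; ring

theorem measure_Y_pos_le_mean_pow (n : ℕ) : P {ω | 0 < g.Y n ω} ≤ g.mean ^ n := by
  calc P {ω | 0 < g.Y n ω} = 1 * P {ω | 1 ≤ (g.Y n ω : ℝ≥0∞)} := by
        simp [Nat.one_le_iff_ne_zero, pos_iff_ne_zero]
    _ ≤ ∫⁻ ω, (g.Y n ω : ℝ≥0∞) ∂P :=
      mul_meas_ge_le_lintegral₀ ((g.measurable_Y n).nat_comp Nat.cast).aemeasurable 1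
    _ = g.mean ^ n := g.lintegral_Y n

theorem mean_pow_succ_le_mul_measure_Y_pos (hmean : g.mean ≤ 1) (n : ℕ) :
    g.mean ^ (n + 1) ≤ (1 + n * g.secondMoment) * P {ω | 0 < g.Y n ω} := by
  rcases eq_or_ne g.mean 0 with h0 | h0
  · simp [h0]
  have hfin : g.mean ≠ ⊤ := ne_top_of_le_ne_top ENNReal.one_ne_top hmean
  have hsupp : Function.support (fun ω => (g.Y n ω : ℝ≥0∞)) = {ω | 0 < g.Y n ω} := by
    ext ω; simp [pos_iff_ne_zero]
  have hPZ : g.mean ^ (2 * n) ≤ (∫⁻ ω, (g.Y n ω : ℝ≥0∞) ^ 2 ∂P) * P {ω | 0 < g.Y n ω} := by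
    have := sq_lintegral_le_mul_measure_support (μ := P) ((g.measurable_Y n).nat_comp Nat.cast)
    rwa [g.lintegral_Y, ← pow_mul, mul_comm n, hsupp] at this
  refine (ENNReal.mul_le_mul_iff_right (pow_ne_zero n h0) (ENNReal.pow_ne_top hfin)).1 ?_
  calc g.mean ^ n * g.mean ^ (n + 1) = g.mean * g.mean ^ (2 * n) := by ring
    _ ≤ g.mean * ((∫⁻ ω, (g.Y n ω : ℝ≥0∞) ^ 2 ∂P) * P {ω | 0 < g.Y n ω}) := by gcongr
    _ = (g.mean * ∫⁻ ω, (g.Y n ω : ℝ≥0∞) ^ 2 ∂P) * P {ω | 0 < g.Y n ω} := by ring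
    _ ≤ (g.mean ^ (2 * n + 1) + n * g.secondMoment * g.mean ^ n) * P {ω | 0 < g.Y n ω} := by
        gcongr; exact g.mean_mul_lintegral_Y_sq_le hmean n
    _ ≤ (g.mean ^ n + n * g.secondMoment * g.mean ^ n) * P {ω | 0 < g.Y n ω} := by
        gcongr (?_ + _) * _
        exact pow_le_pow_of_le_one zero_le hmean (by omega)
    _ = g.mean ^ n * ((1 + n * g.secondMoment) * P {ω | 0 < g.Y n ω}) := by ring

theorem secondMoment_truncate_ne_top (L : ℕ) :
    (g.truncate L).secondMoment ≠ ⊤ := by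
  refine ne_top_of_le_ne_top (b := (L : ℝ≥0∞) ^ 2) (by simp) ?_
  calc (g.truncate L).secondMoment ≤ ∫⁻ _, (L : ℝ≥0∞) ^ 2 ∂P :=
        lintegral_mono fun ω => by gcongr; exact min_le_right _ _
    _ = (L : ℝ≥0∞) ^ 2 := by simp

theorem exists_pow_succ_le_measure_Y_pos (hmean : g.mean ≤ 1) {c : ℝ}
    (hc : 0 ≤ c) (hcm : c < g.mean.toReal) :
    ∃ b, 0 ≤ b ∧ ∀ n : ℕ, c ^ (n + 1) ≤ (1 + b * n) * (P {ω | 0 < g.Y n ω}).toReal := by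
  have hfin : g.mean ≠ ⊤ := ne_top_of_le_ne_top ENNReal.one_ne_top hmean
  obtain ⟨L, hL⟩ := (((ENNReal.tendsto_toReal hfin).comp g.tendsto_mean_truncate).eventually
    (lt_mem_nhds hcm)).exists
  set h := g.truncate L
  have hβ := g.secondMoment_truncate_ne_top L
  refine ⟨h.secondMoment.toReal, ENNReal.toReal_nonneg, fun n => ?_⟩
  calc c ^ (n + 1) ≤ h.mean.toReal ^ (n + 1) := by gcongr; exact hL.le
    _ = (h.mean ^ (n + 1)).toReal := (ENNReal.toReal_pow _ _).symm
    _ ≤ ((1 + n * h.secondMoment) * P {ω | 0 < h.Y n ω}).toReal :=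
        ENNReal.toReal_mono (by finiteness)
          (h.mean_pow_succ_le_mul_measure_Y_pos ((g.mean_truncate_le L).trans hmean) n)
    _ = (1 + h.secondMoment.toReal * n) * (P {ω | 0 < h.Y n ω}).toReal := by
        rw [ENNReal.toReal_mul, ENNReal.toReal_add ENNReal.one_ne_top (by finiteness),
          ENNReal.toReal_mul]
        simp [mul_comm]
    _ ≤ (1 + h.secondMoment.toReal * n) * (P {ω | 0 < g.Y n ω}).toReal := by
        gcongr
        · finiteness
        · exact g.Y_le_Y_of_ξ_le (fun p ω => min_le_left _ _) n _

end Probability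

end GW

theorem subcritical_GW_survival_rate_general
    {Ω : Type} [MeasurableSpace Ω] {P : Measure Ω} [IsProbabilityMeasure P]
    (g : GW Ω P) {m : ℝ}
    (hm : ∫ ω, (g.ξ (0, 0) ω : ℝ) ∂P = m) (h0 : 0 < m) (h1 : m < 1) :
    Tendsto (fun n : ℕ => (n : ℝ)⁻¹ * Real.log (P {ω | 0 < g.Y n ω}).toReal)
      atTop (𝓝 (Real.log m)) := by
  have hmean : g.mean.toReal = m := by
    rw [← hm, integral_eq_lintegral_of_nonneg_ae (ae_of_all _ fun ω => Nat.cast_nonneg _)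
      ((g.meas (0, 0)).nat_comp _).aestronglyMeasurable]
    simp [GW.mean]
  have hfin : g.mean ≠ ⊤ := fun h => by simp [h] at hmean; linarith
  have hmean_le : g.mean ≤ 1 := by
    rw [← ENNReal.ofReal_toReal hfin, hmean]; exact ENNReal.ofReal_le_one.2 h1.le
  refine tendsto_inv_mul_log_of_pow_bounds h0 (fun n => ?_) fun c hc hcm =>
    g.exists_pow_succ_le_measure_Y_pos hmean_le hc.le (hmean ▸ hcm)
  calc (P {ω | 0 < g.Y n ω}).toReal ≤ (g.mean ^ n).toReal :=
        ENNReal.toReal_mono (by finiteness) (g.measure_Y_pos_le_mean_pow n)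
    _ = m ^ n := by rw [ENNReal.toReal_pow, hmean]

/-- For a subcritical Galton–Watson process with mean `m ∈ (0,1)`,
`(1/n) log P(Y_n > 0) → log m`. -/
theorem subcritical_GW_survival_rate
    {Ω : Type} [MeasurableSpace Ω] {P : Measure Ω} [IsProbabilityMeasure P]
    (g : GW Ω P) {m : ℝ}
    (hint : Integrable (fun ω => (g.ξ (0, 0) ω : ℝ)) P)
    (hm : ∫ ω, (g.ξ (0, 0) ω : ℝ) ∂P = m) (h0 : 0 < m) (h1 : m < 1) :
    Tendsto (fun n : ℕ => (n : ℝ)⁻¹ * Real.log (P {ω | 0 < g.Y n ω}).toReal)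
      atTop (𝓝 (Real.log m)) :=
  subcritical_GW_survival_rate_general g hm h0 h1
end
end

section
/- Assume θ > 0 with ψ(θ) < ∞ and θψ'(θ) > ψ(θ), plus the L log L condition E(Σ_{|u|=1} e^{θV(u)} log₊ Σ_{|u|=1} e^{θV(u)}) < ∞. Fix ε ∈ (0, (1/2)(ψ'(θ) − ψ(θ)/θ)). Define A_{n,ε} := { max_{ℓ≥n} ( max_{k≥1} M^{(k,ℓ)} − S_ℓ )/ℓ < −ε }, where M^{(k,ℓ)} = b_ℓ(k) + max_{|u|=ℓ−1} V^{(k,ℓ)}(u). Then P(A_{n,ε}^c) → 0 as n → ∞. -/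
open MeasureTheory ProbabilityTheory Filter Set
open scoped ENNReal NNReal Topology Classical

noncomputable section

open MeasureTheory ProbabilityTheory Filter Set
open scoped ENNReal NNReal Topology Classical

noncomputable section

abbrev Label := List ℕ

/-- exponential `EReal → ℝ≥0∞` with `exp ⊥ = 0`, `exp ⊤ = ∞`. -/
def eexp (x : EReal) : ℝ≥0∞ :=
  if x = ⊥ then 0 else if x = ⊤ then ⊤ else ENNReal.ofReal (Real.exp x.toReal)

/-- logarithm `ℝ≥0∞ → EReal`. -/
def elog (y : ℝ≥0∞) : EReal :=
  if y = 0 then ⊥ else if y = ⊤ then ⊤ else ((Real.log y.toReal : ℝ) : EReal)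

/-- number of atoms of an extended-real position lying in a real set. -/
def cnt (A : Set ℝ) (x : EReal) : ℝ≥0∞ :=
  Set.indicator (Real.toEReal '' A) (fun _ => (1 : ℝ≥0∞)) x

/-- evaluation of a nonnegative test function at an extended position (dead particles ignored). -/
def evalTest (φ : ℝ → ℝ) (x : EReal) : ℝ≥0∞ :=
  if x = ⊥ ∨ x = ⊤ then 0 else ENNReal.ofReal (φ x.toReal)

/-- `e^{-x}` for `x : ℝ≥0∞`. -/
def nexp (x : ℝ≥0∞) : ℝ≥0∞ :=
  if x = ⊤ then 0 else ENNReal.ofReal (Real.exp (-x.toReal))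

/-- `log₊` on `ℝ≥0∞`. -/
def plog (x : ℝ≥0∞) : ℝ≥0∞ :=
  if x = ⊤ then ⊤ else ENNReal.ofReal (Real.log (max x.toReal 1))

variable {Ω : Type} [MeasurableSpace Ω]

/-- A branching random walk: i.i.d. displacement point processes indexed by Ulam–Harris labels
(the label of a particle is the list of child indices along its ancestral line, most recent
first); `disp u ω i` is the displacement of the `i`-th child of particle `u`, equal to `⊥`
if this child does not exist. -/
structure BRW (Ω : Type) [MeasurableSpace Ω] (P : Measure Ω) where
  disp : Label → Ω → ℕ → EReal
  meas : ∀ u, Measurable (disp u)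
  indep : iIndepFun disp P
  ident : ∀ u v, IdentDistrib (disp u) (disp v) P P

namespace BRW

variable {P : Measure Ω}

/-- position `V(u)` of the particle with label `u` (`⊥` if it is dead). -/
def V (b : BRW Ω P) : Label → Ω → EReal
  | [], _ => 0
  | i :: u, ω => b.V u ω + b.disp u ω i

/-- maximal displacement at generation `n`. -/
def M (b : BRW Ω P) (n : ℕ) (ω : Ω) : EReal :=
  ⨆ u : {u : Label // u.length = n}, b.V u ω

/-- `E (Σ_{|u|=1} e^{θ V(u)})`. -/
def Lap (b : BRW Ω P) (θ : ℝ) : ℝ≥0∞ :=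
  ∫⁻ ω, ∑' i : ℕ, (if b.V [i] ω = ⊥ then 0 else eexp ((θ : EReal) * b.V [i] ω)) ∂P

/-- the log-Laplace transform `ψ(θ)`. -/
def ψe (b : BRW Ω P) (θ : ℝ) : EReal := elog (b.Lap θ)

/-- the Legendre transform `ψ*(x) = sup_{θ ≥ 0} (θ x − ψ(θ))`. -/
def ψStar (b : BRW Ω P) (x : ℝ) : EReal :=
  ⨆ θ : {θ : ℝ // 0 ≤ θ}, ((θ.1 * x : ℝ) : EReal) - b.ψe θ.1

/-- `x* = inf_{θ>0} ψ(θ)/θ`. -/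
def xstar (b : BRW Ω P) : EReal :=
  ⨅ θ : {θ : ℝ // 0 < θ}, b.ψe θ.1 * ((θ.1⁻¹ : ℝ) : EReal)

/-- number of particles alive at generation `n`, i.e. `Z_n(ℝ)`. -/
def ZR (b : BRW Ω P) (n : ℕ) (ω : Ω) : ℝ≥0∞ :=
  ∑' u : {u : Label // u.length = n}, if b.V u ω = ⊥ then 0 else 1

/-- number of particles at generation `n` located in `A`, i.e. `Z_n(A)`. -/
def Zset (b : BRW Ω P) (n : ℕ) (A : Set ℝ) (ω : Ω) : ℝ≥0∞ :=
  ∑' u : {u : Label // u.length = n}, cnt A (b.V u ω)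

/-- mass of the extremal process `ℰ_n = Σ_{|u|=n} δ_{V(u)−M_n}` on a set `A`. -/
def Emeas (b : BRW Ω P) (n : ℕ) (ω : Ω) (A : Set ℝ) : ℝ≥0∞ :=
  ∑' u : {u : Label // u.length = n}, cnt A (b.V u ω - b.M n ω)

/-- `ℰ_n(φ) = Σ_{|u|=n} φ(V(u)−M_n)`. -/
def Etest (b : BRW Ω P) (n : ℕ) (φ : ℝ → ℝ) (ω : Ω) : ℝ≥0∞ :=
  ∑' u : {u : Label // u.length = n}, evalTest φ (b.V u ω - b.M n ω)

/-- `W_1^θ = Σ_{|u|=1} e^{θ V(u)}`. -/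
def W1 (b : BRW Ω P) (θ : ℝ) (ω : Ω) : ℝ≥0∞ :=
  ∑' i : ℕ, (if b.V [i] ω = ⊥ then 0 else eexp ((θ : EReal) * b.V [i] ω))

/-- the `L log L` integrability condition (as3). -/
def LlogL (b : BRW Ω P) (θ : ℝ) : Prop :=
  ∫⁻ ω, b.W1 θ ω * plog (b.W1 θ ω) ∂P < ⊤

/-- the branching random walk is non-lattice (as4). -/
def NonLattice (b : BRW Ω P) : Prop :=
  ∀ c d : ℝ,
    P {ω | ∀ i : ℕ, b.V [i] ω ≠ ⊥ → ∃ k : ℤ, b.V [i] ω = ((c + d * k : ℝ) : EReal)} < 1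

/-- `σ² = E (Σ_{|u|=1} (V(u) − ψ'(θ))² e^{θV(u)})` (as2). -/
def VarCond (b : BRW Ω P) (θ ψ' σ2 : ℝ) : Prop :=
  (∫⁻ ω, ∑' i : ℕ, (if b.V [i] ω = ⊥ then 0 else
      ENNReal.ofReal (((b.V [i] ω).toReal - ψ') ^ 2) * eexp ((θ : EReal) * b.V [i] ω)) ∂P)
    = ENNReal.ofReal σ2

end BRW


/-- index type for the independent ingredients of the spine construction. -/
def SpIdx : Type := ℕ ⊕ (ℕ × ℕ)

def SpType : SpIdx → Type :=
  Sum.elim (fun _ => (ℕ → EReal) × ℕ) (fun _ => Label → EReal)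

instance : ∀ i : SpIdx, MeasurableSpace (SpType i) := fun i => by
  cases i with
  | inl k => exact (inferInstance : MeasurableSpace ((ℕ → EReal) × ℕ))
  | inr p => exact (inferInstance : MeasurableSpace (Label → EReal))

/-- The time-reversed spine construction for a branching random walk:
`B k · i = b_{k+1}(i)` is the displacement point process of the children of the spine at
time `k+1`, `W k = w^{(k+1)}` the spine index, `Vc i k = V^{(i,k+1)}` independent copies of
the branching random walk; `(B k, W k)` has the size-biased law with spine choice, all the
ingredients are independent, and the spine step has mean `ψ' = ψ'(θ)` with
`ψ = ψ(θ) < ∞`. -/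
structure SpineSetup (Ω : Type) [MeasurableSpace Ω] (P : Measure Ω) (θ ψ ψ' : ℝ)
    extends BRW Ω P where
  B : ℕ → Ω → ℕ → EReal
  W : ℕ → Ω → ℕ
  Vc : ℕ → ℕ → Label → Ω → EReal
  lapEq : toBRW.Lap θ = ENNReal.ofReal (Real.exp ψ)
  sbLaw : ∀ k : ℕ, ∀ f : (ℕ → EReal) × ℕ → ℝ≥0∞, Measurable f →
    ∫⁻ ω, f (B k ω, W k ω) ∂P
      = ∫⁻ ω, ∑' i : ℕ, (if toBRW.V [i] ω = ⊥ then 0 else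
          eexp ((θ : EReal) * toBRW.V [i] ω - (ψ : EReal)) *
            f (fun j => toBRW.V [j] ω, i)) ∂P
  copyLaw : ∀ i k : ℕ, ∀ f : (Label → EReal) → ℝ≥0∞, Measurable f →
    ∫⁻ ω, f (fun u => Vc i k u ω) ∂P = ∫⁻ ω, f (fun u => toBRW.V u ω) ∂P
  indepAll : iIndepFun (m := fun i : SpIdx => inferInstance)
    (fun i => Sum.rec (motive := fun i => Ω → SpType i)
      (fun k ω => (B k ω, W k ω)) (fun p ω u => Vc p.1 p.2 u ω) i) P
  stepInt : Integrable (fun ω => (B 0 ω (W 0 ω)).toReal) P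
  stepMean : ∫ ω, (B 0 ω (W 0 ω)).toReal ∂P = ψ'

namespace SpineSetup

variable {P : Measure Ω} {θ ψ ψ' : ℝ}

/-- the spine random walk `S_n = Σ_{k=1}^n b_k(w^{(k)})`. -/
def S (s : SpineSetup Ω P θ ψ ψ') (n : ℕ) (ω : Ω) : ℝ :=
  ∑ k ∈ Finset.range n, (s.B k ω (s.W k ω)).toReal

/-- the atom `b_{k+1}(i) + V^{(i,k+1)}(u) − S_{k+1}` of the decoration measure. -/
def atom (s : SpineSetup Ω P θ ψ ψ') (k i : ℕ) (u : Label) (ω : Ω) : EReal :=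
  s.B k ω i + s.Vc i k u ω - ((s.S (k + 1) ω : ℝ) : EReal)

/-- mass of `D_n^θ` on a set `A ⊆ ℝ`. -/
def Dn (s : SpineSetup Ω P θ ψ ψ') (n : ℕ) (ω : Ω) (A : Set ℝ) : ℝ≥0∞ :=
  cnt A 0 + ∑ k ∈ Finset.range n, ∑' i : ℕ, ∑' u : {u : Label // u.length = k},
    if i = s.W k ω then 0 else cnt A (s.atom k i u ω)

/-- mass of `D_∞^θ` on a set `A ⊆ ℝ`. -/
def Dinf (s : SpineSetup Ω P θ ψ ψ') (ω : Ω) (A : Set ℝ) : ℝ≥0∞ :=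
  cnt A 0 + ∑' k : ℕ, ∑' i : ℕ, ∑' u : {u : Label // u.length = k},
    if i = s.W k ω then 0 else cnt A (s.atom k i u ω)

/-- `D_n^θ(φ)` for a nonnegative test function `φ`. -/
def Dtest (s : SpineSetup Ω P θ ψ ψ') (n : ℕ) (φ : ℝ → ℝ) (ω : Ω) : ℝ≥0∞ :=
  ENNReal.ofReal (φ 0) + ∑ k ∈ Finset.range n, ∑' i : ℕ, ∑' u : {u : Label // u.length = k},
    if i = s.W k ω then 0 else evalTest φ (s.atom k i u ω)

/-- `D_∞^θ(φ)` for a nonnegative test function `φ`. -/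
def DtestInf (s : SpineSetup Ω P θ ψ ψ') (φ : ℝ → ℝ) (ω : Ω) : ℝ≥0∞ :=
  ENNReal.ofReal (φ 0) + ∑' k : ℕ, ∑' i : ℕ, ∑' u : {u : Label // u.length = k},
    if i = s.W k ω then 0 else evalTest φ (s.atom k i u ω)

/-- `C(θ) = E ( (1/D_∞^θ({0})) 1_{D_∞^θ((0,∞)) = 0} )`. -/
def Cmass (s : SpineSetup Ω P θ ψ ψ') : ℝ≥0∞ :=
  ∫⁻ ω, (if s.Dinf ω (Set.Ioi 0) = 0 then (s.Dinf ω {0})⁻¹ else 0) ∂P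

/-- the event `A_{n+1,ε}` of Lemma 2.3. -/
def Aev (s : SpineSetup Ω P θ ψ ψ') (n : ℕ) (ε : ℝ) : Set Ω :=
  {ω | ∀ ℓ, n ≤ ℓ →
    (⨆ k : ℕ, (s.B ℓ ω k + ⨆ u : {u : Label // u.length = ℓ}, s.Vc k ℓ u ω))
      - ((s.S (ℓ + 1) ω : ℝ) : EReal) < ((-ε * (ℓ + 1) : ℝ) : EReal)}

end SpineSetup

/-!
Put `a = ψ' - 3ε/2`. By the strong law of large numbers, almost surely `S_ℓ > (ψ' - ε/2) ℓ` for
all large `ℓ`, so it suffices that almost surely `max_k M^{(k,ℓ)} ≤ a ℓ` for all large `ℓ`; by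
Borel–Cantelli it is enough that the failure probabilities are summable. Fix `0 < c < θa - ψ`.
The events `Σ_k e^{θ b_ℓ(k)} > e^{cℓ}` have summable probabilities: under the size-biased law
this sum is `W_1^θ`, and `Σ_ℓ 1{W_1^θ > e^{cℓ}} ≤ log₊ W_1^θ / c` is integrable against `W_1^θ`
by the `L log L` condition. On their complement, a Chernoff bound conditional on the spine data,
combined with the many-to-one identity `E Σ_{|u|=ℓ} e^{θV(u)} = e^{ℓψ}` for the independent
copies, bounds the probability that `max_k M^{(k,ℓ)} > aℓ` by `e^{cℓ} e^{-θaℓ} e^{ℓψ}`, which is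
geometrically small.

The spine data are not assumed measurable. But the identities prescribing their laws hold for
lower integrals, and the lower integral of an indicator is an inner measure: every preimage of a
measurable set and its complement have inner measures adding up to `1`. So the data are almost
everywhere measurable, and we may first pass to a measurable version.
-/

namespace MeasureTheory

variable {α β : Type*} [MeasurableSpace α] [MeasurableSpace β] {μ : Measure α}

lemma exists_measurableSet_subset_lintegral_indicator_le (s : Set α) :
    ∃ t ⊆ s, MeasurableSet t ∧ ∫⁻ a, s.indicator 1 a ∂μ ≤ μ t := by
  obtain ⟨g, hg, hgs, heq⟩ := exists_measurable_le_lintegral_eq μ (s.indicator 1)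
  have ht : MeasurableSet {a | 0 < g a} := measurableSet_lt measurable_const hg
  refine ⟨{a | 0 < g a}, fun a ha => ?_, ht, ?_⟩
  · by_contra has
    have := hgs a
    simp only [indicator_of_notMem has, nonpos_iff_eq_zero] at this
    exact (ne_of_gt ha) this
  · rw [heq, ← lintegral_indicator_one ht]
    refine lintegral_mono fun a => ?_
    by_cases ha : 0 < g a
    · rw [indicator_of_mem (show a ∈ {a | 0 < g a} from ha)]
      exact (hgs a).trans (indicator_le_self' (fun _ _ => zero_le_one) a)
    · simp_all

lemma nullMeasurableSet_of_le_lintegral_indicator_add_compl [IsFiniteMeasure μ] {s : Set α}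
    (h : μ univ ≤ ∫⁻ a, s.indicator 1 a ∂μ + ∫⁻ a, sᶜ.indicator 1 a ∂μ) :
    NullMeasurableSet s μ := by
  obtain ⟨t, hts, ht, hst⟩ := exists_measurableSet_subset_lintegral_indicator_le (μ := μ) s
  obtain ⟨t', hts', ht', hst'⟩ := exists_measurableSet_subset_lintegral_indicator_le (μ := μ) sᶜ
  have hnull : μ (t ∪ t')ᶜ = 0 := by
    rw [measure_compl (ht.union ht') (measure_ne_top _ _),
      measure_union (disjoint_compl_right.mono hts hts') ht', tsub_eq_zero_iff_le]
    exact h.trans (add_le_add hst hst')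
  refine ht.nullMeasurableSet.congr (ae_eq_set.mpr ⟨by simp [sdiff_eq_empty.mpr hts], ?_⟩)
  exact measure_mono_null (fun a ha => by simpa [ha.1, ha.2] using fun h => hts' h ha.1) hnull

lemma aemeasurable_of_lintegral_comp_eq [IsProbabilityMeasure μ]
    [MeasurableSpace.CountablyGenerated β] {ν : Measure β} [IsProbabilityMeasure ν] {X : α → β}
    (h : ∀ f : β → ℝ≥0∞, Measurable f → ∫⁻ a, f (X a) ∂μ = ∫⁻ b, f b ∂ν) :
    AEMeasurable X μ := by
  have key : ∀ F, MeasurableSet F → ∫⁻ a, (X ⁻¹' F).indicator 1 a ∂μ = ν F := fun F hF => by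
    rw [← lintegral_indicator_one hF, ← h _ (measurable_one.indicator hF)]
    rfl
  refine NullMeasurable.aemeasurable fun E hE =>
    nullMeasurableSet_of_le_lintegral_indicator_add_compl ?_
  rw [← preimage_compl, key E hE, key _ hE.compl, measure_add_measure_compl hE, measure_univ,
    measure_univ]

lemma tendsto_measure_biUnion_ge_zero [IsFiniteMeasure μ] {s : ℕ → Set α}
    (hs : ∀ n, NullMeasurableSet (s n) μ) (h : ∀ᵐ a ∂μ, ∀ᶠ n in atTop, a ∉ s n) :
    Tendsto (fun n => μ (⋃ m ≥ n, s m)) atTop (𝓝 0) := by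
  have hnull : μ (⋂ n, ⋃ m ≥ n, s m) = 0 := by
    refine measure_mono_null (fun a ha => ?_) (ae_iff.mp h)
    simp only [mem_iInter, mem_iUnion, exists_prop] at ha
    simpa [eventually_atTop] using ha
  have hanti : Antitone fun n => ⋃ m ≥ n, s m := fun n n' hn =>
    biUnion_mono (fun m hm => le_trans hn hm) fun _ _ => le_rfl
  have := tendsto_measure_iInter_atTop (μ := μ)
    (fun n => .iUnion fun m => .iUnion fun _ => hs m) hanti ⟨0, measure_ne_top μ _⟩
  rwa [hnull] at this

lemma measurable_eval_fst_snd : Measurable fun d : (ℕ → β) × ℕ => d.1 d.2 :=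
  measurable_from_prod_countable_left measurable_pi_apply

end MeasureTheory

namespace EReal

variable {θ : ℝ}

lemma exp_coe_mul (θ : ℝ) (x : EReal) : exp (θ * x) = exp x ^ θ := by
  rw [mul_comm, exp_mul]

lemma exp_coe_mul_add (hθ : 0 ≤ θ) (x y : EReal) :
    exp (θ * (x + y)) = exp (θ * x) * exp (θ * y) := by
  rw [exp_coe_mul, exp_coe_mul, exp_coe_mul, exp_add, ENNReal.mul_rpow_of_nonneg _ _ hθ]

lemma exp_coe_mul_monotone (hθ : 0 ≤ θ) : Monotone fun x : EReal => exp (θ * x) := by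
  intro x y h
  simp only [exp_coe_mul]
  exact ENNReal.rpow_le_rpow (exp_monotone h) hθ

lemma exp_coe_mul_iSup (hθ : 0 < θ) {ι : Sort*} (f : ι → EReal) :
    exp (θ * ⨆ i, f i) = ⨆ i, exp (θ * f i) := by
  simp only [exp_coe_mul]
  rw [← expOrderIso_apply, expOrderIso.map_iSup, ← ENNReal.orderIsoRpow_apply θ hθ,
    OrderIso.map_iSup]
  rfl

lemma exp_coe_mul_bot (hθ : 0 < θ) : exp (θ * ⊥) = 0 := by
  rw [coe_mul_bot_of_pos hθ, exp_bot]

lemma measurable_exp_coe_mul (θ : ℝ) : Measurable fun x : EReal => exp (θ * x) :=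
  measurable_exp.comp (measurable_const.mul measurable_id)

end EReal

lemma eexp_eq_exp : eexp = EReal.exp := by
  funext x
  induction x <;> simp [eexp]

lemma eexp_sub_coe (x : EReal) (c : ℝ) :
    eexp (x - c) = ENNReal.ofReal (Real.exp (-c)) * eexp x := by
  rw [eexp_eq_exp, sub_eq_add_neg, ← EReal.coe_neg, EReal.exp_add, EReal.exp_coe, mul_comm]

lemma ite_bot_eexp {θ : ℝ} (hθ : 0 < θ) (x : EReal) :
    (if x = ⊥ then 0 else eexp (θ * x)) = EReal.exp (θ * x) := by
  split_ifs with h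
  · rw [h, EReal.exp_coe_mul_bot hθ]
  · rw [eexp_eq_exp]

lemma plog_top : plog ⊤ = ⊤ := if_pos rfl

lemma tsum_ite_exp_lt_le_plog_div {c : ℝ} (hc : 0 < c) (w : ℝ≥0∞) :
    ∑' ℓ : ℕ, (if ENNReal.ofReal (Real.exp (c * (ℓ + 1))) < w then 1 else 0)
      ≤ plog w / ENNReal.ofReal c := by
  rcases eq_or_ne w ⊤ with rfl | hw
  · simp [plog_top, ENNReal.top_div, ENNReal.ofReal_ne_top]
  set A := Real.log (max w.toReal 1) / c
  have hA : 0 ≤ A := div_nonneg (Real.log_nonneg (le_max_right _ _)) hc.le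
  have hlt : ∀ ℓ : ℕ, ENNReal.ofReal (Real.exp (c * (ℓ + 1))) < w → ℓ < ⌊A⌋₊ := by
    intro ℓ hℓ
    have h1 : Real.exp (c * (ℓ + 1)) < max w.toReal 1 :=
      ((ENNReal.ofReal_lt_iff_lt_toReal (Real.exp_nonneg _) hw).mp hℓ).trans_le (le_max_left _ _)
    have h2 : (ℓ : ℝ) + 1 ≤ A := by
      rw [le_div_iff₀ hc, mul_comm]
      exact ((Real.lt_log_iff_exp_lt (by positivity)).mpr h1).le
    exact Nat.lt_of_succ_le (Nat.le_floor (by exact_mod_cast h2))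
  calc ∑' ℓ : ℕ, (if ENNReal.ofReal (Real.exp (c * (ℓ + 1))) < w then 1 else 0)
      ≤ ∑' ℓ : ℕ, (if ℓ < ⌊A⌋₊ then (1 : ℝ≥0∞) else 0) :=
        ENNReal.tsum_le_tsum fun ℓ => by
          by_cases h : ENNReal.ofReal (Real.exp (c * (ℓ + 1))) < w
          · simp [h, hlt ℓ h]
          · simp [h]
    _ = ⌊A⌋₊ := by
        rw [tsum_eq_sum (s := Finset.range ⌊A⌋₊) fun ℓ hℓ => if_neg (by simpa using hℓ)]
        simp [Finset.filter_true_of_mem fun ℓ hℓ => Finset.mem_range.mp hℓ]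
    _ ≤ ENNReal.ofReal A := by
        rw [← ENNReal.ofReal_natCast]
        exact ENNReal.ofReal_le_ofReal (Nat.floor_le hA)
    _ = plog w / ENNReal.ofReal c := by
        rw [ENNReal.ofReal_div_of_pos hc]
        simp [plog, hw]

def lengthSuccEquiv (n : ℕ) :
    {u : Label // u.length = n + 1} ≃ ℕ × {u : Label // u.length = n} where
  toFun w := (w.1.headI, ⟨w.1.tail, by simp [w.2]⟩)
  invFun p := ⟨p.1 :: p.2.1, by simp [p.2.2]⟩
  left_inv := by
    rintro ⟨_ | ⟨i, v⟩, hw⟩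
    · simp at hw
    · rfl
  right_inv _ := rfl

lemma measurable_exp_mul_iSup_length (θ : ℝ) (ℓ : ℕ) :
    Measurable fun y : Label → EReal => EReal.exp (θ * ⨆ u : {u : Label // u.length = ℓ}, y u) :=
  (EReal.measurable_exp_coe_mul θ).comp (.iSup fun _ => measurable_pi_apply _)

namespace BRW

def positionOf : Label → (Label → ℕ → EReal) → EReal
  | [], _ => 0
  | i :: u, d => positionOf u d + d u i

lemma measurable_positionOf (u : Label) : Measurable (positionOf u) := by
  induction u with
  | nil => exact measurable_const
  | cons i u ih => exact ih.add ((measurable_pi_apply i).comp (measurable_pi_apply u))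

lemma positionOf_congr (u : Label) {d d' : Label → ℕ → EReal}
    (h : ∀ v, v <:+ u → v ≠ u → d v = d' v) : positionOf u d = positionOf u d' := by
  induction u with
  | nil => rfl
  | cons i u ih =>
    have hu : u ≠ i :: u := fun he => by simpa using congrArg List.length he
    refine congrArg₂ (· + ·) (ih fun v hv hne => h v (hv.trans (List.suffix_cons i u)) ?_)
      (congrFun (h u (List.suffix_cons i u) hu) i)
    rintro rfl
    simpa using hv.length_le

variable {P : Measure Ω} (b : BRW Ω P)

lemma V_eq_positionOf (u : Label) (ω : Ω) : b.V u ω = positionOf u fun v => b.disp v ω := by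
  induction u with
  | nil => rfl
  | cons i u ih => exact congrArg (· + b.disp u ω i) ih

lemma measurable_V (u : Label) : Measurable (b.V u) := by
  simp only [funext (b.V_eq_positionOf u)]
  exact (measurable_positionOf u).comp (measurable_pi_lambda _ b.meas)

-- `V u` only reads the displacements of the strict ancestors of `u`, i.e. of the strict suffixes
-- of its label.
lemma indepFun_V_disp (u : Label) : IndepFun (b.V u) (b.disp u) P := by
  set S : Finset Label := u.tails.toFinset.erase u
  have hS : ∀ v, v ∈ S ↔ v <:+ u ∧ v ≠ u := fun v => by
    simp [S, List.mem_tails, and_comm]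
  have h := b.indep.indepFun_finset S {u} (by simp [hS]) b.meas
  have hV : b.V u = (fun g : S → ℕ → EReal => positionOf u fun v =>
      if hv : v ∈ S then g ⟨v, hv⟩ else 0) ∘ fun ω (v : S) => b.disp v ω := by
    funext ω
    rw [b.V_eq_positionOf]
    exact positionOf_congr u fun v hv hne => by simp [(hS v).mpr ⟨hv, hne⟩]
  rw [hV]
  refine h.comp ((measurable_positionOf u).comp (measurable_pi_lambda _ fun v => ?_))
    (measurable_pi_apply ⟨u, Finset.mem_singleton_self u⟩)
  by_cases hv : v ∈ S
  · simpa [hv] using measurable_pi_apply _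
  · simp [hv]


variable {θ : ℝ}

lemma W1_eq (hθ : 0 < θ) (ω : Ω) : b.W1 θ ω = ∑' i, EReal.exp (θ * b.V [i] ω) :=
  tsum_congr fun _ => ite_bot_eexp hθ _

lemma measurable_W1 (hθ : 0 < θ) : Measurable (b.W1 θ) := by
  simp only [funext (b.W1_eq hθ)]
  exact .tsum fun i => (EReal.measurable_exp_coe_mul θ).comp (b.measurable_V [i])

lemma lintegral_tsum_exp_disp (hθ : 0 < θ) (u : Label) :
    ∫⁻ ω, ∑' i, EReal.exp (θ * b.disp u ω i) ∂P = b.Lap θ := by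
  have hf : Measurable fun d : ℕ → EReal => ∑' i, EReal.exp (θ * d i) :=
    .tsum fun i => (EReal.measurable_exp_coe_mul θ).comp (measurable_pi_apply i)
  have h := ((b.ident u []).comp hf).lintegral_eq
  simp only [Function.comp_def] at h
  rw [h, Lap]
  simp only [ite_bot_eexp hθ]
  exact lintegral_congr fun ω => tsum_congr fun i => by rw [V, V, zero_add]

lemma lintegral_tsum_exp_V [IsProbabilityMeasure P] (hθ : 0 < θ) (n : ℕ) :
    ∫⁻ ω, ∑' u : {u : Label // u.length = n}, EReal.exp (θ * b.V u ω) ∂P = b.Lap θ ^ n := by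
  induction n with
  | zero =>
    have h : ∀ ω, ∑' u : {u : Label // u.length = 0}, EReal.exp (θ * b.V u ω) = 1 := fun ω => by
      rw [tsum_eq_single (⟨[], rfl⟩ : {u : Label // u.length = 0}) fun u hu =>
        absurd (Subtype.ext (List.eq_nil_of_length_eq_zero u.2)) hu]
      simp [V]
    simp [h]
  | succ n ih =>
    have hsplit : ∀ ω, ∑' w : {u : Label // u.length = n + 1}, EReal.exp (θ * b.V w ω)
        = ∑' u : {u : Label // u.length = n},
            EReal.exp (θ * b.V u ω) * ∑' i, EReal.exp (θ * b.disp u ω i) := fun ω => by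
      calc _ = ∑' c : ℕ × {u : Label // u.length = n},
            EReal.exp (θ * b.V c.2 ω) * EReal.exp (θ * b.disp c.2 ω c.1) := by
            rw [← (lengthSuccEquiv n).symm.tsum_eq]
            exact tsum_congr fun c => EReal.exp_coe_mul_add hθ.le _ _
        _ = _ := by
            rw [ENNReal.tsum_prod (f := fun (i : ℕ) (u : {u : Label // u.length = n}) =>
              EReal.exp (θ * b.V u ω) * EReal.exp (θ * b.disp u ω i)), ENNReal.tsum_comm]
            exact tsum_congr fun u => ENNReal.tsum_mul_left
    have hf : Measurable fun d : ℕ → EReal => ∑' i, EReal.exp (θ * d i) :=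
      .tsum fun i => (EReal.measurable_exp_coe_mul θ).comp (measurable_pi_apply i)
    have hV : ∀ u, Measurable fun ω => EReal.exp (θ * b.V u ω) := fun u =>
      (EReal.measurable_exp_coe_mul θ).comp (b.measurable_V u)
    calc _ = ∑' u : {u : Label // u.length = n}, ∫⁻ ω,
          EReal.exp (θ * b.V u ω) * ∑' i, EReal.exp (θ * b.disp u ω i) ∂P := by
          simp only [hsplit]
          exact lintegral_tsum fun u => ((hV u).mul (hf.comp (b.meas u))).aemeasurable
      _ = ∑' u : {u : Label // u.length = n}, (∫⁻ ω, EReal.exp (θ * b.V u ω) ∂P) * b.Lap θ :=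
          tsum_congr fun u => by
            rw [lintegral_mul_eq_lintegral_mul_lintegral_of_indepFun''
              (g := fun ω => ∑' i, EReal.exp (θ * b.disp u ω i)) (hV u).aemeasurable
              (hf.comp (b.meas u)).aemeasurable
              ((b.indepFun_V_disp u).comp (EReal.measurable_exp_coe_mul θ) hf),
              b.lintegral_tsum_exp_disp hθ]
      _ = b.Lap θ ^ (n + 1) := by
          rw [ENNReal.tsum_mul_right, ← lintegral_tsum fun (u : {u : Label // u.length = n}) =>
            (hV u).aemeasurable, ih, pow_succ]

lemma lintegral_exp_iSup_V_le [IsProbabilityMeasure P] (hθ : 0 < θ) (n : ℕ) :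
    ∫⁻ ω, EReal.exp (θ * ⨆ u : {u : Label // u.length = n}, b.V u ω) ∂P ≤ b.Lap θ ^ n := by
  rw [← b.lintegral_tsum_exp_V hθ n]
  exact lintegral_mono fun ω =>
    (EReal.exp_coe_mul_iSup hθ _).trans_le (iSup_le fun u => ENNReal.le_tsum u)

def sizeBiasedDensity (θ ψ : ℝ) (i : ℕ) (ω : Ω) : ℝ≥0∞ :=
  if b.V [i] ω = ⊥ then 0 else eexp ((θ : EReal) * b.V [i] ω - (ψ : EReal))

/-- The law of the size-biased reproduction point process `L̂` together with the spine index. -/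
def sizeBiasedLaw (θ ψ : ℝ) : Measure ((ℕ → EReal) × ℕ) :=
  Measure.sum fun i =>
    (P.withDensity (b.sizeBiasedDensity θ ψ i)).map fun ω => (fun j => b.V [j] ω, i)

lemma sizeBiasedDensity_eq (θ ψ : ℝ) (i : ℕ) (ω : Ω) :
    b.sizeBiasedDensity θ ψ i ω = ENNReal.ofReal (Real.exp (-ψ)) *
      if b.V [i] ω = ⊥ then 0 else eexp ((θ : EReal) * b.V [i] ω) := by
  unfold sizeBiasedDensity
  split_ifs <;> simp [eexp_sub_coe]

lemma tsum_sizeBiasedDensity (θ ψ : ℝ) (ω : Ω) :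
    ∑' i, b.sizeBiasedDensity θ ψ i ω = ENNReal.ofReal (Real.exp (-ψ)) * b.W1 θ ω := by
  simp only [sizeBiasedDensity_eq, ENNReal.tsum_mul_left, W1]

lemma measurable_sizeBiasedDensity (θ ψ : ℝ) (i : ℕ) :
    Measurable (b.sizeBiasedDensity θ ψ i) := by
  simp only [funext (b.sizeBiasedDensity_eq θ ψ i), eexp_eq_exp]
  exact measurable_const.mul <| .ite (b.measurable_V [i] (measurableSet_singleton ⊥))
    measurable_const ((EReal.measurable_exp_coe_mul θ).comp (b.measurable_V [i]))

lemma lintegral_sizeBiasedLaw (ψ : ℝ) {f : (ℕ → EReal) × ℕ → ℝ≥0∞} (hf : Measurable f) :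
    ∫⁻ d, f d ∂b.sizeBiasedLaw θ ψ
      = ∫⁻ ω, ∑' i, b.sizeBiasedDensity θ ψ i ω * f (fun j => b.V [j] ω, i) ∂P := by
  have hZ : ∀ i : ℕ, Measurable fun ω => ((fun j => b.V [j] ω, i) : (ℕ → EReal) × ℕ) :=
    fun i => (measurable_pi_lambda _ fun j => b.measurable_V [j]).prodMk measurable_const
  rw [sizeBiasedLaw, lintegral_sum_measure, lintegral_tsum (f := fun i ω =>
    b.sizeBiasedDensity θ ψ i ω * f (fun j => b.V [j] ω, i)) fun i =>
    ((b.measurable_sizeBiasedDensity θ ψ i).mul (hf.comp (hZ i))).aemeasurable]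
  refine tsum_congr fun i => ?_
  rw [lintegral_map hf (hZ i)]
  exact lintegral_withDensity_eq_lintegral_mul _ (b.measurable_sizeBiasedDensity θ ψ i)
    (hf.comp (hZ i))

lemma lintegral_sizeBiasedLaw_comp_fst (ψ : ℝ) {g : (ℕ → EReal) → ℝ≥0∞} (hg : Measurable g) :
    ∫⁻ d, g d.1 ∂b.sizeBiasedLaw θ ψ
      = ENNReal.ofReal (Real.exp (-ψ)) * ∫⁻ ω, b.W1 θ ω * g (fun j => b.V [j] ω) ∂P := by
  rw [b.lintegral_sizeBiasedLaw ψ (f := fun d => g d.1) (hg.comp measurable_fst),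
    ← lintegral_const_mul']
  · simp only [ENNReal.tsum_mul_right, tsum_sizeBiasedDensity, mul_assoc]
  · exact ENNReal.ofReal_ne_top

lemma isProbabilityMeasure_sizeBiasedLaw {ψ : ℝ} (h : b.Lap θ = ENNReal.ofReal (Real.exp ψ)) :
    IsProbabilityMeasure (b.sizeBiasedLaw θ ψ) := by
  constructor
  have h1 := b.lintegral_sizeBiasedLaw_comp_fst (θ := θ) ψ (g := fun _ => 1) measurable_const
  simp only [lintegral_const, mul_one, one_mul] at h1
  rw [h1, show ∫⁻ ω, b.W1 θ ω ∂P = b.Lap θ from rfl, h, ← ENNReal.ofReal_mul (Real.exp_nonneg _),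
    ← Real.exp_add, neg_add_cancel, Real.exp_zero, ENNReal.ofReal_one]

end BRW

namespace SpineSetup

variable {P : Measure Ω} {θ ψ ψ' : ℝ} (s : SpineSetup Ω P θ ψ ψ')

lemma lintegral_comp_B_W (k : ℕ) {f : (ℕ → EReal) × ℕ → ℝ≥0∞} (hf : Measurable f) :
    ∫⁻ ω, f (s.B k ω, s.W k ω) ∂P = ∫⁻ d, f d ∂s.sizeBiasedLaw θ ψ := by
  rw [s.sbLaw k f hf, s.lintegral_sizeBiasedLaw ψ hf]
  simp only [BRW.sizeBiasedDensity, ite_mul, zero_mul]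

lemma indepFun_B_W (k l : ℕ) (h : k ≠ l) :
    IndepFun (fun ω => (s.B k ω, s.W k ω)) (fun ω => (s.B l ω, s.W l ω)) P :=
  s.indepAll.indepFun (i := (Sum.inl k : SpIdx)) (j := Sum.inl l) fun he => h (Sum.inl.inj he)

lemma indepFun_B_W_Vc (k ℓ : ℕ) :
    IndepFun (fun ω => (s.B ℓ ω, s.W ℓ ω)) (fun ω u => s.Vc k ℓ u ω) P :=
  s.indepAll.indepFun (i := (Sum.inl ℓ : SpIdx)) (j := Sum.inr (k, ℓ)) Sum.inl_ne_inr

section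

variable [IsProbabilityMeasure P]

lemma aemeasurable_B_W (k : ℕ) : AEMeasurable (fun ω => (s.B k ω, s.W k ω)) P :=
  have := s.isProbabilityMeasure_sizeBiasedLaw s.lapEq
  aemeasurable_of_lintegral_comp_eq fun _ hf => s.lintegral_comp_B_W k hf

lemma aemeasurable_Vc (i k : ℕ) : AEMeasurable (fun ω u => s.Vc i k u ω) P := by
  have hV : Measurable fun ω (u : Label) => s.V u ω := measurable_pi_lambda _ s.measurable_V
  have := Measure.isProbabilityMeasure_map (μ := P) hV.aemeasurable
  exact aemeasurable_of_lintegral_comp_eq fun f hf => by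
    rw [lintegral_map hf hV]
    exact s.copyLaw i k f hf

lemma identDistrib_B_W (k l : ℕ) :
    IdentDistrib (fun ω => (s.B k ω, s.W k ω)) (fun ω => (s.B l ω, s.W l ω)) P P where
  aemeasurable_fst := s.aemeasurable_B_W k
  aemeasurable_snd := s.aemeasurable_B_W l
  map_eq := Measure.ext_of_lintegral _ fun f hf => by
    rw [lintegral_map' hf.aemeasurable (s.aemeasurable_B_W k),
      lintegral_map' hf.aemeasurable (s.aemeasurable_B_W l),
      s.lintegral_comp_B_W k hf, s.lintegral_comp_B_W l hf]

lemma ae_tendsto_S_div : ∀ᵐ ω ∂P, Tendsto (fun n : ℕ => s.S n ω / n) atTop (𝓝 ψ') := by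
  have hg : Measurable fun d : (ℕ → EReal) × ℕ => (d.1 d.2).toReal :=
    measurable_ereal_toReal.comp measurable_eval_fst_snd
  have h := strong_law_ae_real (fun k ω => (s.B k ω (s.W k ω)).toReal) s.stepInt
    (fun k l hkl => (s.indepFun_B_W k l hkl).comp hg hg)
    (fun k => (s.identDistrib_B_W k 0).comp hg)
  rwa [s.stepMean] at h

end

structure IsMeasurable : Prop where
  B : ∀ k, Measurable (s.B k)
  W : ∀ k, Measurable (s.W k)
  Vc : ∀ i k, Measurable fun ω u => s.Vc i k u ω

def IsVersion (s' : SpineSetup Ω P θ ψ ψ') : Prop :=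
  s'.toBRW = s.toBRW ∧ ∀ᵐ ω ∂P, (∀ k, s'.B k ω = s.B k ω) ∧ (∀ k, s'.W k ω = s.W k ω) ∧
    ∀ i k u, s'.Vc i k u ω = s.Vc i k u ω

lemma exists_isVersion_isMeasurable [IsProbabilityMeasure P] :
    ∃ s' : SpineSetup Ω P θ ψ ψ', s.IsVersion s' ∧ s'.IsMeasurable := by
  have hX := s.aemeasurable_B_W
  have hY := s.aemeasurable_Vc
  have hstep : (fun ω => (s.B 0 ω (s.W 0 ω)).toReal)
      =ᵐ[P] fun ω => (((hX 0).mk _ ω).1 ((hX 0).mk _ ω).2).toReal :=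
    (hX 0).ae_eq_mk.fun_comp fun d => (d.1 d.2).toReal
  refine ⟨{ s.toBRW with
    B := fun k ω => ((hX k).mk _ ω).1
    W := fun k ω => ((hX k).mk _ ω).2
    Vc := fun i k u ω => (hY i k).mk _ ω u
    lapEq := s.lapEq
    sbLaw := fun k f hf => (lintegral_congr_ae ((hX k).ae_eq_mk.fun_comp f).symm).trans
      (s.sbLaw k f hf)
    copyLaw := fun i k f hf => (lintegral_congr_ae ((hY i k).ae_eq_mk.fun_comp f).symm).trans
      (s.copyLaw i k f hf)
    indepAll := s.indepAll.congr fun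
      | .inl k => (hX k).ae_eq_mk
      | .inr p => (hY p.1 p.2).ae_eq_mk
    stepInt := s.stepInt.congr hstep
    stepMean := (integral_congr_ae hstep).symm.trans s.stepMean }, ⟨rfl, ?_⟩, ?_⟩
  · filter_upwards [ae_all_iff.2 fun k => (hX k).ae_eq_mk,
      ae_all_iff.2 fun i => ae_all_iff.2 fun k => (hY i k).ae_eq_mk] with ω hBW hV
    exact ⟨fun k => congrArg Prod.fst (hBW k).symm, fun k => congrArg Prod.snd (hBW k).symm,
      fun i k u => congrFun (hV i k).symm u⟩
  · exact ⟨fun k => measurable_fst.comp (hX k).measurable_mk,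
      fun k => measurable_snd.comp (hX k).measurable_mk, fun i k => (hY i k).measurable_mk⟩

lemma measure_compl_Aev_eq_of_isVersion {s' : SpineSetup Ω P θ ψ ψ'} (h : s.IsVersion s')
    (n : ℕ) (ε : ℝ) : P (s'.Aev n ε)ᶜ = P (s.Aev n ε)ᶜ := by
  refine measure_congr (EventuallyEq.compl ?_)
  filter_upwards [h.2] with ω ⟨hB, hW, hV⟩
  change (ω ∈ s'.Aev n ε) = (ω ∈ s.Aev n ε)
  simp only [Aev, S, mem_ofPred_eq, hB, hW, hV]

def copyMax (k ℓ : ℕ) (ω : Ω) : EReal := ⨆ u : {u : Label // u.length = ℓ}, s.Vc k ℓ u ω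

/-- `max_k M^{(k,ℓ+1)}`: as in `SpineSetup`, time indices are shifted by one. -/
def decorationMax (ℓ : ℕ) (ω : Ω) : EReal := ⨆ k, (s.B ℓ ω k + s.copyMax k ℓ ω)

/-- `Σ_k e^{θ b_{ℓ+1}(k)}`. -/
def childWeight (ℓ : ℕ) (ω : Ω) : ℝ≥0∞ := ∑' k, EReal.exp (θ * s.B ℓ ω k)

lemma exp_decorationMax_le (hθ : 0 < θ) (ℓ : ℕ) (ω : Ω) :
    EReal.exp (θ * s.decorationMax ℓ ω)
      ≤ ∑' k, EReal.exp (θ * s.B ℓ ω k) * EReal.exp (θ * s.copyMax k ℓ ω) := by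
  rw [decorationMax, EReal.exp_coe_mul_iSup hθ]
  exact iSup_le fun k => (EReal.exp_coe_mul_add hθ.le _ _).trans_le (ENNReal.le_tsum k)

lemma lintegral_exp_copyMax_le [IsProbabilityMeasure P] (hθ : 0 < θ) (k ℓ : ℕ) :
    ∫⁻ ω, EReal.exp (θ * s.copyMax k ℓ ω) ∂P ≤ ENNReal.ofReal (Real.exp ψ) ^ ℓ := by
  rw [← s.lapEq]
  exact (s.copyLaw k ℓ _ (measurable_exp_mul_iSup_length θ ℓ)).trans_le
    (s.lintegral_exp_iSup_V_le hθ ℓ)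

lemma compl_Aev_subset {a b ε : ℝ} (hab : a + ε ≤ b) (n : ℕ) :
    (s.Aev n ε)ᶜ ⊆ ⋃ ℓ ≥ n, ({ω | s.S (ℓ + 1) ω ≤ b * (ℓ + 1)}
      ∪ {ω | ((a * (ℓ + 1) : ℝ) : EReal) < s.decorationMax ℓ ω}) := by
  intro ω hω
  by_contra h
  simp only [mem_iUnion, mem_union, mem_ofPred_eq, not_exists, not_or, not_le, not_lt] at h
  refine hω fun ℓ hℓ => ?_
  obtain ⟨hS, hD⟩ := h ℓ hℓ
  calc s.decorationMax ℓ ω - s.S (ℓ + 1) ω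
      ≤ ((a * (ℓ + 1) : ℝ) : EReal) - s.S (ℓ + 1) ω := EReal.sub_le_sub hD le_rfl
    _ = ((a * (ℓ + 1) - s.S (ℓ + 1) ω : ℝ) : EReal) := (EReal.coe_sub _ _).symm
    _ < ((-ε * (ℓ + 1) : ℝ) : EReal) := EReal.coe_lt_coe_iff.2 (by nlinarith)

variable {s}

lemma IsMeasurable.copyMax (hm : s.IsMeasurable) (k ℓ : ℕ) : Measurable (s.copyMax k ℓ) :=
  .iSup fun u => (measurable_pi_apply (u : Label)).comp (hm.Vc k ℓ)

lemma IsMeasurable.decorationMax (hm : s.IsMeasurable) (ℓ : ℕ) :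
    Measurable (s.decorationMax ℓ) :=
  .iSup fun k => ((measurable_pi_apply k).comp (hm.B ℓ)).add (hm.copyMax k ℓ)

lemma IsMeasurable.childWeight (hm : s.IsMeasurable) (ℓ : ℕ) : Measurable (s.childWeight ℓ) :=
  .tsum fun k => (EReal.measurable_exp_coe_mul θ).comp ((measurable_pi_apply k).comp (hm.B ℓ))

lemma IsMeasurable.S (hm : s.IsMeasurable) (n : ℕ) : Measurable (s.S n) :=
  Finset.measurable_sum _ fun k _ => measurable_ereal_toReal.comp
    (measurable_eval_fst_snd.comp ((hm.B k).prodMk (hm.W k)))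

lemma IsMeasurable.measure_lt_childWeight (hm : s.IsMeasurable) (hθ : 0 < θ) (ℓ : ℕ)
    (x : ℝ≥0∞) : P {ω | x < s.childWeight ℓ ω}
      = ENNReal.ofReal (Real.exp (-ψ)) * ∫⁻ ω, s.W1 θ ω * (if x < s.W1 θ ω then 1 else 0) ∂P := by
  have hg : Measurable fun d : ℕ → EReal =>
      if x < ∑' k, EReal.exp (θ * d k) then (1 : ℝ≥0∞) else 0 :=
    .ite (measurableSet_lt measurable_const
      (.tsum fun k => (EReal.measurable_exp_coe_mul θ).comp (measurable_pi_apply k)))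
      measurable_const measurable_const
  calc _ = ∫⁻ ω, (if x < ∑' k, EReal.exp (θ * s.B ℓ ω k) then 1 else 0) ∂P := by
        rw [← lintegral_indicator_one (measurableSet_lt measurable_const (hm.childWeight ℓ))]
        simp only [indicator_apply, mem_ofPred_eq, Pi.one_apply]
        rfl
    _ = _ := s.lintegral_comp_B_W ℓ (f := fun d => if x < ∑' k, EReal.exp (θ * d.1 k) then 1 else 0)
        (hg.comp measurable_fst)
    _ = _ := s.lintegral_sizeBiasedLaw_comp_fst ψ hg
    _ = _ := by simp only [s.W1_eq hθ]

lemma IsMeasurable.tsum_measure_exp_lt_childWeight_ne_top (hm : s.IsMeasurable) (hθ : 0 < θ)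
    (hL : s.LlogL θ) {c : ℝ} (hc : 0 < c) :
    ∑' ℓ : ℕ, P {ω | ENNReal.ofReal (Real.exp (c * (ℓ + 1))) < s.childWeight ℓ ω} ≠ ⊤ := by
  have hW := s.measurable_W1 hθ
  have hind : ∀ ℓ : ℕ, Measurable fun ω =>
      s.W1 θ ω * if ENNReal.ofReal (Real.exp (c * (ℓ + 1))) < s.W1 θ ω then 1 else 0 :=
    fun ℓ => hW.mul (.ite (measurableSet_lt measurable_const hW) measurable_const measurable_const)
  simp only [hm.measure_lt_childWeight hθ, ENNReal.tsum_mul_left]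
  refine ENNReal.mul_ne_top ENNReal.ofReal_ne_top (ne_top_of_le_ne_top
    (ENNReal.div_ne_top hL.ne (ENNReal.ofReal_pos.2 hc).ne') ?_)
  rw [← lintegral_tsum fun ℓ => (hind ℓ).aemeasurable, div_eq_mul_inv,
    ← lintegral_mul_const' _ _ (ENNReal.inv_ne_top.2 (ENNReal.ofReal_pos.2 hc).ne')]
  refine lintegral_mono fun ω => ?_
  rw [ENNReal.tsum_mul_left, mul_assoc, ← div_eq_mul_inv]
  gcongr
  exact tsum_ite_exp_lt_le_plog_div hc _

lemma IsMeasurable.lintegral_ite_mul_exp_decorationMax_le [IsProbabilityMeasure P]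
    (hm : s.IsMeasurable) (hθ : 0 < θ) (ℓ : ℕ) (x : ℝ≥0∞) :
    ∫⁻ ω, (if s.childWeight ℓ ω ≤ x then 1 else 0) * EReal.exp (θ * s.decorationMax ℓ ω) ∂P
      ≤ x * ENNReal.ofReal (Real.exp ψ) ^ ℓ := by
  set φ : ℕ → (ℕ → EReal) × ℕ → ℝ≥0∞ := fun k d =>
    (if ∑' j, EReal.exp (θ * d.1 j) ≤ x then 1 else 0) * EReal.exp (θ * d.1 k)
  have hφ : ∀ k, Measurable (φ k) := fun k =>
    (Measurable.ite (measurableSet_le (.tsum fun j => (EReal.measurable_exp_coe_mul θ).comp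
      ((measurable_pi_apply j).comp measurable_fst)) measurable_const) measurable_const
      measurable_const).mul
      ((EReal.measurable_exp_coe_mul θ).comp ((measurable_pi_apply k).comp measurable_fst))
  have hX : Measurable fun ω => (s.B ℓ ω, s.W ℓ ω) := (hm.B ℓ).prodMk (hm.W ℓ)
  have hM : ∀ k, Measurable fun ω => EReal.exp (θ * s.copyMax k ℓ ω) := fun k =>
    (EReal.measurable_exp_coe_mul θ).comp (hm.copyMax k ℓ)
  have hweight : ∫⁻ ω, ∑' k, φ k (s.B ℓ ω, s.W ℓ ω) ∂P ≤ x := by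
    refine (lintegral_mono fun ω => ?_).trans_eq (by rw [lintegral_const, measure_univ, mul_one])
    simp only [φ, ENNReal.tsum_mul_left]
    split_ifs with h
    · simpa using h
    · simp
  calc _ ≤ ∫⁻ ω, ∑' k, φ k (s.B ℓ ω, s.W ℓ ω) * EReal.exp (θ * s.copyMax k ℓ ω) ∂P := by
        refine lintegral_mono fun ω => ?_
        simp only [φ, mul_assoc]
        rw [ENNReal.tsum_mul_left]
        exact mul_le_mul_right (s.exp_decorationMax_le hθ ℓ ω) _
    _ = ∑' k, (∫⁻ ω, φ k (s.B ℓ ω, s.W ℓ ω) ∂P) * ∫⁻ ω, EReal.exp (θ * s.copyMax k ℓ ω) ∂P := by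
        rw [lintegral_tsum (f := fun k ω =>
          φ k (s.B ℓ ω, s.W ℓ ω) * EReal.exp (θ * s.copyMax k ℓ ω)) fun k =>
          (((hφ k).comp hX).mul (hM k)).aemeasurable]
        -- the truncated spine weight is a function of `(b_{ℓ+1}, w_{ℓ+1})` alone
        exact tsum_congr fun k => lintegral_mul_eq_lintegral_mul_lintegral_of_indepFun''
          ((hφ k).comp hX).aemeasurable (hM k).aemeasurable
          ((s.indepFun_B_W_Vc k ℓ).comp (hφ k) (measurable_exp_mul_iSup_length θ ℓ))
    _ ≤ ∑' k, (∫⁻ ω, φ k (s.B ℓ ω, s.W ℓ ω) ∂P) * ENNReal.ofReal (Real.exp ψ) ^ ℓ := by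
        gcongr with k
        exact s.lintegral_exp_copyMax_le hθ k ℓ
    _ ≤ x * ENNReal.ofReal (Real.exp ψ) ^ ℓ := by
        rw [ENNReal.tsum_mul_right, ← lintegral_tsum (f := fun k ω => φ k (s.B ℓ ω, s.W ℓ ω))
          fun k => ((hφ k).comp hX).aemeasurable]
        gcongr

lemma IsMeasurable.measure_childWeight_le_lt_decorationMax_le [IsProbabilityMeasure P]
    (hm : s.IsMeasurable) (hθ : 0 < θ) (ℓ : ℕ) (a : ℝ) (x : ℝ≥0∞) :
    P {ω | s.childWeight ℓ ω ≤ x ∧ (a : EReal) < s.decorationMax ℓ ω}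
      ≤ ENNReal.ofReal (Real.exp (-(θ * a))) * x * ENNReal.ofReal (Real.exp ψ) ^ ℓ := by
  set e := ENNReal.ofReal (Real.exp (-(θ * a)))
  set A := {ω | s.childWeight ℓ ω ≤ x ∧ (a : EReal) < s.decorationMax ℓ ω}
  have he : e * EReal.exp (θ * a) = 1 := by
    rw [← EReal.coe_mul, EReal.exp_coe, ← ENNReal.ofReal_mul (Real.exp_nonneg _), ← Real.exp_add,
      neg_add_cancel, Real.exp_zero, ENNReal.ofReal_one]
  have hA : MeasurableSet A := (measurableSet_le (hm.childWeight ℓ) measurable_const).inter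
    (measurableSet_lt measurable_const (hm.decorationMax ℓ))
  calc P A = ∫⁻ ω, A.indicator 1 ω ∂P := (lintegral_indicator_one hA).symm
    _ ≤ ∫⁻ ω, e * ((if s.childWeight ℓ ω ≤ x then 1 else 0)
          * EReal.exp (θ * s.decorationMax ℓ ω)) ∂P := by
        refine lintegral_mono fun ω => ?_
        by_cases hω : ω ∈ A
        · rw [indicator_of_mem hω, Pi.one_apply, if_pos hω.1, one_mul, ← he]
          exact mul_le_mul_right (EReal.exp_coe_mul_monotone hθ.le hω.2.le) e
        · rw [indicator_of_notMem hω]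
          exact zero_le
    _ ≤ e * (x * ENNReal.ofReal (Real.exp ψ) ^ ℓ) := by
        rw [lintegral_const_mul' _ _ ENNReal.ofReal_ne_top]
        gcongr
        exact hm.lintegral_ite_mul_exp_decorationMax_le hθ ℓ x
    _ = e * x * ENNReal.ofReal (Real.exp ψ) ^ ℓ := (mul_assoc _ _ _).symm

lemma IsMeasurable.tsum_measure_lt_decorationMax_ne_top [IsProbabilityMeasure P]
    (hm : s.IsMeasurable) (hθ : 0 < θ) (hL : s.LlogL θ) {a : ℝ} (ha : ψ < θ * a) :
    ∑' ℓ : ℕ, P {ω | ((a * (ℓ + 1) : ℝ) : EReal) < s.decorationMax ℓ ω} ≠ ⊤ := by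
  set c := (θ * a - ψ) / 2 with hc_def
  have hc : 0 < c := by linarith
  have hψ : ψ = θ * a - 2 * c := by rw [hc_def]; ring
  -- either the spine's children carry weight above `e^{c(ℓ+1)}`, or the Chernoff bound applies
  have hle : ∀ ℓ : ℕ, P {ω | ((a * (ℓ + 1) : ℝ) : EReal) < s.decorationMax ℓ ω}
      ≤ P {ω | ENNReal.ofReal (Real.exp (c * (ℓ + 1))) < s.childWeight ℓ ω}
        + ENNReal.ofReal (Real.exp (c - θ * a) * Real.exp (ℓ * (-c))) := by
    intro ℓ
    refine (measure_mono fun ω hω => ?_).trans ((measure_union_le _ _).trans (add_le_add le_rfl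
      ((hm.measure_childWeight_le_lt_decorationMax_le hθ ℓ (a * (ℓ + 1))
        (ENNReal.ofReal (Real.exp (c * (ℓ + 1))))).trans_eq ?_)))
    · by_cases h : ENNReal.ofReal (Real.exp (c * (ℓ + 1))) < s.childWeight ℓ ω
      exacts [Or.inl h, Or.inr ⟨not_lt.1 h, hω⟩]
    · rw [← ENNReal.ofReal_pow (Real.exp_nonneg _), ← ENNReal.ofReal_mul (Real.exp_nonneg _),
        ← ENNReal.ofReal_mul (by positivity), ← Real.exp_nat_mul, ← Real.exp_add, ← Real.exp_add,
        ← Real.exp_add, hψ]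
      ring_nf
  refine ne_top_of_le_ne_top ?_ (ENNReal.tsum_le_tsum hle)
  rw [ENNReal.tsum_add, ← ENNReal.ofReal_tsum_of_nonneg (fun _ => by positivity)
    ((Real.summable_exp_nat_mul_iff.2 (neg_neg_of_pos hc)).mul_left _)]
  exact ENNReal.add_ne_top.2 ⟨hm.tsum_measure_exp_lt_childWeight_ne_top hθ hL hc,
    ENNReal.ofReal_ne_top⟩

theorem IsMeasurable.tendsto_measure_compl_Aev [IsProbabilityMeasure P] (hm : s.IsMeasurable)
    (hθ : 0 < θ) (hL : s.LlogL θ) {ε : ℝ} (hε : ε ∈ Ioo 0 ((ψ' - ψ / θ) / 2)) :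
    Tendsto (fun n : ℕ => P (s.Aev n ε)ᶜ) atTop (𝓝 0) := by
  obtain ⟨hε0, hε2⟩ := hε
  have ha : ψ < θ * (ψ' - 3 / 2 * ε) := by
    have h : ψ / θ < ψ' - 2 * ε := by linarith
    rw [div_lt_iff₀ hθ] at h
    nlinarith
  have hD := ae_eventually_notMem (hm.tsum_measure_lt_decorationMax_ne_top hθ hL ha)
  have hS : ∀ᵐ ω ∂P, ∀ᶠ ℓ : ℕ in atTop, ω ∉ {ω | s.S (ℓ + 1) ω ≤ (ψ' - ε / 2) * (ℓ + 1)} := by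
    filter_upwards [s.ae_tendsto_S_div] with ω hω
    filter_upwards [((tendsto_add_atTop_iff_nat 1).2 hω).eventually
      (eventually_gt_nhds (show ψ' - ε / 2 < ψ' by linarith))] with ℓ hℓ
    rw [Nat.cast_succ, lt_div_iff₀ (by positivity)] at hℓ
    simpa using hℓ
  refine tendsto_of_tendsto_of_tendsto_of_le_of_le tendsto_const_nhds
    (tendsto_measure_biUnion_ge_zero (fun ℓ => ((measurableSet_le (hm.S _) measurable_const).union
      (measurableSet_lt measurable_const (hm.decorationMax ℓ))).nullMeasurableSet) ?_)
    (fun _ => zero_le) fun n => measure_mono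
    (s.compl_Aev_subset (a := ψ' - 3 / 2 * ε) (b := ψ' - ε / 2) (by linarith) n)
  filter_upwards [hS, hD] with ω hSω hDω
  filter_upwards [hSω, hDω] with ℓ h1 h2
  exact fun h => h.elim h1 h2

end SpineSetup

theorem spine_localization_general
    {Ω : Type} [MeasurableSpace Ω] {P : Measure Ω} [IsProbabilityMeasure P]
    {θ ψ ψ' : ℝ} (s : SpineSetup Ω P θ ψ ψ')
    (hθ : 0 < θ) (hL : s.toBRW.LlogL θ)
    {ε : ℝ} (hε : ε ∈ Set.Ioo 0 ((ψ' - ψ / θ) / 2)) :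
    Tendsto (fun n : ℕ => P (s.Aev n ε)ᶜ) atTop (𝓝 0) := by
  obtain ⟨s', hs', hm⟩ := s.exists_isVersion_isMeasurable
  simp only [← s.measure_compl_Aev_eq_of_isVersion hs']
  exact hm.tendsto_measure_compl_Aev hθ (hs'.1 ▸ hL) hε

/-- (Lemma 2.3) Under (as1), (as3) and for
`ε ∈ (0, (ψ'(θ) − ψ(θ)/θ)/2)`, the probability of the complement of
`A_{n,ε} = { max_{ℓ≥n} (max_k M^{(k,ℓ)} − S_ℓ)/ℓ < −ε }` tends to `0`. -/
theorem spine_localization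
    {Ω : Type} [MeasurableSpace Ω] {P : Measure Ω} [IsProbabilityMeasure P]
    {θ ψ ψ' : ℝ} (s : SpineSetup Ω P θ ψ ψ')
    (hθ : 0 < θ) (hsp : ψ < θ * ψ') (hL : s.toBRW.LlogL θ)
    {ε : ℝ} (hε : ε ∈ Set.Ioo 0 ((ψ' - ψ / θ) / 2)) :
    Tendsto (fun n : ℕ => P (s.Aev n ε)ᶜ) atTop (𝓝 0) :=
  spine_localization_general s hθ hL hε
end
end
end
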